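/- arXiv:1208.3166 — 5 statements merged into one kernel-verified Lean document; each statement's English description precedes it below -/
import Mathlib

section
/- Let ℓ ≥ 1, let σ(1), …, σ(ℓ) be finite multisets of positive integers, and let π = (p₁, …, p_h) be a finite (possibly empty) sequence of positive integers. For each i let s_i = |σ(i)| and let a(i)_1, …, a(i)_{t_i} be the multiplicities of the distinct elements of σ(i). Then ∑ (−1)^{m−h} = ∏_{i=1}^{ℓ} (−1)^{s_i} · s_i! / (a(i)_1! ⋯ a(i)_{t_i}!), where the (finite) sum on the left runs over all integers m ≥ 0 and all tuples (c, d(1), …, d(ℓ)) with c = (c₁, …, c_m) a sequence of positive integers and each d(i) = (d(i)_1, …, d(i)_m) a sequence of nonnegative integers, subject to: (1) ∑_{i=1}^ℓ d(i)_j ≤ c_j for every j; (2) for each i, the multiset of nonzero values among d(i)_1, …, d(i)_m equals σ(i); (3) the subsequence of nonzero entries of the sequence (c₁ − ∑_i d(i)_1, …, c_m − ∑_i d(i)_m) equals (p₁, …, p_h). (This is Lemma 3.7 of the paper, encoding an element μ of 𝒬 with exactly m distinct parts by the sequence c of its part-multiplicities, the distinguished sub-multisets μ(i) by the sequences d(i),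 and the complement μ∖∪μ(i) by π.) -/
/-!
Induction on `∑ |σ(i)| + h`. Split off the first column: `c₁ = d(1)₁ + ⋯ + d(ℓ)₁ + r`, where
each `d(i)₁` is `0` or an element of `σ(i)`, the residual `r` is `0` or `p₁`, and not all of them
vanish. The remaining columns form a configuration for the multisets `σ(i) ∖ {d(i)₁}` and for
`π` or its tail, and the sign flips exactly when `r = 0`. The right-hand side
`∏ (-1)^{s_i} · #(arrangements of σ(i))` satisfies the same recursion, because the arrangements
of a multiset `s ≠ 0` are counted by their first letter: `#arr(s) = ∑_{a} #arr(s ∖ {a})` over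
the distinct `a ∈ s`. Hence the signed counts of `s ∖ {a}`, for `a = 0` or a distinct element
of `s`, add up to `[s = 0]`, and the two sides of the recursion agree.
-/

open Finset

namespace Multiset

variable {α : Type*} [DecidableEq α]

theorem filter_cons_eq_iff {p : α → Prop} [DecidablePred p] {a : α} {s t : Multiset α}
    (ht : ∀ b ∈ t, p b) : filter p (a ::ₘ s) = t ↔ (p a → a ∈ t) ∧ filter p s = t.erase a := by
  by_cases hpa : p a
  · rw [filter_cons_of_pos _ hpa]
    constructor
    · rintro rfl
      simp
    · rintro ⟨hat, hs⟩
      rw [hs, cons_erase (hat hpa)]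
  · have hat : a ∉ t := fun h => hpa (ht a h)
    rw [filter_cons_of_neg _ hpa, erase_of_notMem hat]
    tauto

theorem multinomial_toFinset_count (m : Multiset α) :
    Nat.multinomial m.toFinset m.count = m.countPerms :=
  Finsupp.multinomial_of_support_subset (d := m.toFinsupp) subset_rfl

theorem countPerms_erase_mul_card {a : α} {m : Multiset α} (ha : a ∈ m) :
    (m.erase a).countPerms * card m = m.countPerms * m.count a := by
  obtain ⟨k, hk⟩ := Nat.exists_eq_add_of_lt (count_pos.2 ha)
  obtain ⟨n, hn⟩ := Nat.exists_eq_add_of_lt (card_pos_iff_exists_mem.2 ⟨a, ha⟩)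
  have hfilter : (m.erase a).filter (a ≠ ·) = m.filter (a ≠ ·) := by
    ext b
    by_cases hb : a = b
    · simp [hb]
    · simp [hb, count_erase_of_ne (Ne.symm hb)]
  rw [countPerms_filter_ne a m, countPerms_filter_ne a (m.erase a), hfilter,
    card_erase_of_mem ha, count_erase_self, hk, hn]
  simp only [zero_add, Nat.add_sub_cancel, Nat.pred_succ]
  rw [mul_right_comm, mul_comm _ (n + 1), Nat.add_one_mul_choose_eq]
  ring

theorem sum_countPerms_erase {m : Multiset α} (hm : m ≠ 0) :
    ∑ a ∈ m.toFinset, (m.erase a).countPerms = m.countPerms := by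
  refine Nat.eq_of_mul_eq_mul_right (card_pos.2 hm) ?_
  rw [sum_mul, sum_congr rfl fun a ha => countPerms_erase_mul_card (mem_toFinset.1 ha),
    ← mul_sum, toFinset_sum_count_eq]

noncomputable def signedCountPerms (m : Multiset α) : ℤ := (-1) ^ card m * m.countPerms

theorem sum_signedCountPerms_erase {m : Multiset α} (hm : m ≠ 0) :
    ∑ a ∈ m.toFinset, signedCountPerms (m.erase a) = -signedCountPerms m := by
  have hcard : ∀ a ∈ m.toFinset, card (m.erase a) + 1 = card m := fun a ha =>
    card_erase_add_one (mem_toFinset.1 ha)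
  calc ∑ a ∈ m.toFinset, signedCountPerms (m.erase a)
      = ∑ a ∈ m.toFinset, -(-1) ^ card m * ((m.erase a).countPerms : ℤ) :=
        sum_congr rfl fun a ha => by rw [signedCountPerms, ← hcard a ha, pow_succ]; ring
    _ = -signedCountPerms m := by
        rw [← mul_sum, ← Nat.cast_sum, sum_countPerms_erase hm, signedCountPerms, neg_mul]

theorem sum_insert_signedCountPerms_erase {m : Multiset α} {b : α} (hb : b ∉ m) :
    ∑ a ∈ insert b m.toFinset, signedCountPerms (m.erase a) = if m = 0 then 1 else 0 := by
  rw [sum_insert (mt mem_toFinset.1 hb), erase_of_notMem hb]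
  split_ifs with hm
  · simp [hm, signedCountPerms]
  · rw [sum_signedCountPerms_erase hm, add_neg_cancel]

end Multiset

open Multiset in
theorem sum_piFinset_prod_signedCountPerms_erase {ι α : Type*} [Fintype ι] [DecidableEq ι]
    [DecidableEq α] {σ : ι → Multiset α} {b : α} (hb : ∀ i, b ∉ σ i) :
    ∑ e ∈ Fintype.piFinset (fun i => insert b (σ i).toFinset),
        ∏ i, signedCountPerms ((σ i).erase (e i)) = if ∀ i, σ i = 0 then 1 else 0 := by
  rw [← prod_univ_sum (fun i => insert b (σ i).toFinset)
    (fun i a => signedCountPerms ((σ i).erase a)), ← Fintype.prod_boole]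
  exact prod_congr rfl fun i _ => sum_insert_signedCountPerms_erase (hb i)

theorem List.filter_cons_eq_iff {α : Type*} {p : α → Bool} {a : α} {l l' : List α} :
    filter p (a :: l) = l' ↔
      (p a → l'.head? = some a) ∧ filter p l = if p a then l'.tail else l' := by
  cases hpa : p a <;> cases l' <;> grind

section Configurations

variable {ι : Type*} [Fintype ι]

def residuals (p : List ℕ × (ι → List ℕ)) : List ℕ :=
  List.ofFn fun j : Fin p.1.length => p.1.get j - ∑ i, (p.2 i).getD j.1 0

def configurations (σ : ι → Multiset ℕ) (π : List ℕ) : Set (List ℕ × (ι → List ℕ)) :=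
  {p | (∀ x ∈ p.1, 0 < x) ∧ (∀ i, (p.2 i).length = p.1.length) ∧
    (∀ j : Fin p.1.length, ∑ i, (p.2 i).getD j.1 0 ≤ p.1.get j) ∧
    (∀ i, ((p.2 i : Multiset ℕ).filter (· ≠ 0)) = σ i) ∧
    (residuals p).filter (· ≠ 0) = π}

/-- Prepends a part of multiplicity `∑ i, e i + r`, of which `e i` copies go to `μ(i)` and `r` to
the complement, where `x = (e, r)`. -/
def consColumn (x : (ι → ℕ) × ℕ) (p : List ℕ × (ι → List ℕ)) : List ℕ × (ι → List ℕ) :=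
  ((∑ i, x.1 i + x.2) :: p.1, fun i => x.1 i :: p.2 i)

variable {σ : ι → Multiset ℕ} {π : List ℕ} {x y : (ι → ℕ) × ℕ} {p q : List ℕ × (ι → List ℕ)}

theorem residuals_consColumn : residuals (consColumn x p) = x.2 :: residuals p := by
  simp [residuals, consColumn, List.ofFn_succ]

theorem consColumn_inj : consColumn x p = consColumn y q ↔ x = y ∧ p = q := by
  refine ⟨fun h => ?_, by rintro ⟨rfl, rfl⟩; rfl⟩
  simp only [consColumn, Prod.mk.injEq, List.cons.injEq, funext_iff] at h
  obtain ⟨⟨hsum, h1⟩, h2⟩ := h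
  have hx : x.1 = y.1 := funext fun i => (h2 i).1
  rw [hx] at hsum
  exact ⟨Prod.ext hx (by omega), Prod.ext h1 (funext fun i => (h2 i).2)⟩

theorem pairwiseDisjoint_image_consColumn (s : Set ((ι → ℕ) × ℕ))
    (S : (ι → ℕ) × ℕ → Set (List ℕ × (ι → List ℕ))) :
    s.PairwiseDisjoint fun x => consColumn x '' S x := by
  intro x _ y _ hxy
  refine Set.disjoint_left.2 ?_
  rintro _ ⟨p, -, rfl⟩ ⟨q, -, h⟩
  exact hxy (consColumn_inj.1 h).1.symm

theorem length_le_of_mem_configurations (hp : p ∈ configurations σ π) :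
    π.length ≤ p.1.length := by
  rw [← hp.2.2.2.2]
  exact (List.length_filter_le _ _).trans List.length_ofFn.le

theorem nil_mem_configurations_iff {d : ι → List ℕ} :
    ([], d) ∈ configurations σ π ↔ d = (fun _ => []) ∧ (∀ i, σ i = 0) ∧ π = [] := by
  simp only [configurations, Set.mem_ofPred_eq, List.length_nil, List.length_eq_zero_iff,
    funext_iff]
  constructor
  · rintro ⟨-, hd, -, hσ, hπ⟩
    refine ⟨hd, fun i => ?_, ?_⟩
    · simp [← hσ i, hd i]
    · simp [← hπ, residuals]
  · rintro ⟨hd, hσ, rfl⟩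
    exact ⟨by simp, hd, fun j => j.elim0, fun i => by simp [hσ i, hd i], by simp [residuals]⟩

theorem exists_consColumn_eq {c₀ : ℕ} {c : List ℕ} {d : ι → List ℕ}
    (hp : (c₀ :: c, d) ∈ configurations σ π) : ∃ x q, consColumn x q = (c₀ :: c, d) := by
  obtain ⟨-, hlen, hsum, -⟩ := hp
  have hd : ∀ i, (d i).headI :: (d i).tail = d i := fun i =>
    List.cons_head!_tail (List.ne_nil_of_length_eq_add_one (hlen i))
  have h0 : ∑ i, (d i).headI ≤ c₀ :=
    calc ∑ i, (d i).headI = ∑ i, (d i).getD 0 0 := by congr! with i; cases d i <;> rfl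
      _ ≤ c₀ := hsum ⟨0, Nat.succ_pos _⟩
  refine ⟨(fun i => (d i).headI, c₀ - ∑ i, (d i).headI), (c, fun i => (d i).tail), ?_⟩
  simp only [consColumn, Nat.add_sub_cancel' h0, hd]

variable [DecidableEq ι]

def columns (σ : ι → Multiset ℕ) (π : List ℕ) : Finset ((ι → ℕ) × ℕ) :=
  (Fintype.piFinset (fun i => insert 0 (σ i).toFinset) ×ˢ insert 0 π.head?.toFinset).erase 0

theorem mem_columns :
    x ∈ columns σ π ↔
      x ≠ 0 ∧ (∀ i, x.1 i ≠ 0 → x.1 i ∈ σ i) ∧ (x.2 ≠ 0 → π.head? = some x.2) := by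
  simp [columns, or_iff_not_imp_left, eq_comm]

theorem consColumn_mem_configurations_iff (hσ : ∀ i, 0 ∉ σ i) :
    consColumn x p ∈ configurations σ π ↔ x ∈ columns σ π ∧
      p ∈ configurations (fun i => (σ i).erase (x.1 i)) (if x.2 = 0 then π else π.tail) := by
  have hσ' : ∀ i, ∀ b ∈ σ i, b ≠ 0 := fun i b hb h => hσ i (h ▸ hb)
  have hx : x ≠ 0 ↔ 0 < ∑ i, x.1 i + x.2 := by
    simp only [ne_eq, Prod.ext_iff, funext_iff, Nat.pos_iff_ne_zero, Nat.add_eq_zero_iff,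
      sum_eq_zero_iff, mem_univ, true_implies, Prod.fst_zero, Prod.snd_zero, Pi.zero_apply]
  simp only [configurations, Set.mem_ofPred_eq, residuals_consColumn, mem_columns, hx,
    List.filter_cons_eq_iff]
  simp only [consColumn, List.forall_mem_cons, List.length_cons,
    Nat.add_right_cancel_iff, Fin.forall_fin_succ, ← Multiset.cons_coe,
    Multiset.filter_cons_eq_iff (hσ' _), Fin.val_zero, Fin.val_succ, List.getD_cons_zero,
    List.getD_cons_succ, List.get_eq_getElem, List.getElem_cons_zero, List.getElem_cons_succ,
    Nat.le_add_right, true_and, decide_eq_true_eq, ite_not, forall_and]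
  tauto

theorem configurations_eq (hσ : ∀ i, 0 ∉ σ i) :
    configurations σ π =
      (if (∀ i, σ i = 0) ∧ π = [] then {([], fun _ => [])} else ∅) ∪
        ⋃ x ∈ columns σ π, consColumn x ''
          configurations (fun i => (σ i).erase (x.1 i)) (if x.2 = 0 then π else π.tail) := by
  ext ⟨_ | ⟨c₀, c⟩, d⟩
  · split_ifs with h <;> simp [nil_mem_configurations_iff, consColumn, h]
  · simp only [Set.mem_union, Set.mem_iUnion, Set.mem_image, exists_prop]
    constructor
    · intro hp
      obtain ⟨x, q, hq⟩ := exists_consColumn_eq hp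
      rw [← hq, consColumn_mem_configurations_iff hσ] at hp
      exact Or.inr ⟨x, hp.1, q, hp.2, hq⟩
    · rintro (h | ⟨x, hx, q, hq, hxq⟩)
      · split_ifs at h <;> simp at h
      · exact hxq ▸ (consColumn_mem_configurations_iff hσ).2 ⟨hx, hq⟩

theorem card_add_length_lt_of_mem_columns (hx : x ∈ columns σ π) :
    ∑ i, Multiset.card ((σ i).erase (x.1 i)) + (if x.2 = 0 then π else π.tail).length <
      ∑ i, Multiset.card (σ i) + π.length := by
  obtain ⟨hx0, hxσ, hxπ⟩ := mem_columns.1 hx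
  have hle : ∀ i, Multiset.card ((σ i).erase (x.1 i)) ≤ Multiset.card (σ i) :=
    fun i => Multiset.card_erase_le
  split_ifs with h2
  · obtain ⟨i, hi⟩ : ∃ i, x.1 i ≠ 0 := by
      by_contra! h
      exact hx0 (Prod.ext (funext h) h2)
    have := sum_lt_sum (fun i _ => hle i)
      ⟨i, mem_univ i, Multiset.card_erase_lt_of_mem (hxσ i hi)⟩
    omega
  · obtain ⟨t, rfl⟩ := List.head?_eq_some_iff.1 (hxπ h2)
    have := sum_le_sum fun i (_ : i ∈ univ) => hle i
    simp only [List.tail_cons, List.length_cons]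
    omega

theorem neg_one_pow_length_consColumn (hx : x ∈ columns σ π)
    (hq : (if x.2 = 0 then π else π.tail).length ≤ q.1.length) :
    (-1 : ℤ) ^ ((consColumn x q).1.length - π.length) =
      (if x.2 = 0 then -1 else 1) *
        (-1) ^ (q.1.length - (if x.2 = 0 then π else π.tail).length) := by
  simp only [consColumn, List.length_cons]
  split_ifs at hq ⊢ with h2
  · rw [Nat.sub_add_comm hq, pow_succ]
    ring
  · obtain ⟨t, rfl⟩ := List.head?_eq_some_iff.1 ((mem_columns.1 hx).2.2 h2)
    simp

theorem ite_add_sum_columns_eq_prod_signedCountPerms (hσ : ∀ i, 0 ∉ σ i) (hπ : 0 ∉ π) :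
    (if (∀ i, σ i = 0) ∧ π = [] then 1 else 0) +
      ∑ x ∈ columns σ π, (if x.2 = 0 then -1 else 1) *
        ∏ i, Multiset.signedCountPerms ((σ i).erase (x.1 i)) =
    ∏ i, Multiset.signedCountPerms (σ i) := by
  have hmem : (0 : (ι → ℕ) × ℕ) ∈
      Fintype.piFinset (fun i => insert 0 (σ i).toFinset) ×ˢ insert 0 π.head?.toFinset := by
    simp
  have hsplit : ∑ x ∈ Fintype.piFinset (fun i => insert 0 (σ i).toFinset) ×ˢ
        insert 0 π.head?.toFinset,
        (if x.2 = 0 then -1 else 1) * ∏ i, Multiset.signedCountPerms ((σ i).erase (x.1 i)) =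
      (∑ r ∈ insert 0 π.head?.toFinset, if r = 0 then -1 else 1) *
        ∑ e ∈ Fintype.piFinset (fun i => insert 0 (σ i).toFinset),
          ∏ i, Multiset.signedCountPerms ((σ i).erase (e i)) := by
    rw [sum_mul_sum, sum_product_right]
  have hsign : (∑ r ∈ insert 0 π.head?.toFinset, if r = 0 then (-1 : ℤ) else 1) =
      if π = [] then -1 else 0 := by
    cases π with
    | nil => simp
    | cons a t =>
      have ha : a ≠ 0 := fun h => hπ (h ▸ List.mem_cons_self)
      simp [sum_insert, ha, Ne.symm ha]
  rw [columns, sum_erase_eq_sub hmem, hsplit, hsign, sum_piFinset_prod_signedCountPerms_erase hσ]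
  simp only [Prod.snd_zero, Prod.fst_zero, Pi.zero_apply, Multiset.erase_of_notMem (hσ _)]
  split_ifs <;> simp_all

theorem finite_and_finsum_configurations {σ : ι → Multiset ℕ} {π : List ℕ}
    (hσ : ∀ i, 0 ∉ σ i) (hπ : 0 ∉ π) :
    (configurations σ π).Finite ∧
      ∑ᶠ p ∈ configurations σ π, (-1 : ℤ) ^ (p.1.length - π.length) =
        ∏ i, Multiset.signedCountPerms (σ i) := by
  have ih : ∀ x ∈ columns σ π,
      (configurations (fun i => (σ i).erase (x.1 i)) (if x.2 = 0 then π else π.tail)).Finite ∧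
      ∑ᶠ p ∈ configurations (fun i => (σ i).erase (x.1 i)) (if x.2 = 0 then π else π.tail),
          (-1 : ℤ) ^ (p.1.length - (if x.2 = 0 then π else π.tail).length) =
        ∏ i, Multiset.signedCountPerms ((σ i).erase (x.1 i)) := fun x hx =>
    finite_and_finsum_configurations (fun i h => hσ i (Multiset.mem_of_mem_erase h))
      (by split_ifs; exacts [hπ, fun h => hπ (List.mem_of_mem_tail h)])
  have hnil : (if (∀ i, σ i = 0) ∧ π = [] then {([], fun _ => [])} else ∅ :
      Set (List ℕ × (ι → List ℕ))).Finite := by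
    split_ifs <;> simp
  have hcolumns : (⋃ x ∈ columns σ π, consColumn x ''
      configurations (fun i => (σ i).erase (x.1 i)) (if x.2 = 0 then π else π.tail)).Finite :=
    (columns σ π).finite_toSet.biUnion fun x hx => (ih x hx).1.image _
  have hdisj : Disjoint (if (∀ i, σ i = 0) ∧ π = [] then {([], fun _ => [])} else ∅ :
      Set (List ℕ × (ι → List ℕ))) (⋃ x ∈ columns σ π, consColumn x ''
        configurations (fun i => (σ i).erase (x.1 i)) (if x.2 = 0 then π else π.tail)) := by
    split_ifs
    · simp [consColumn]
    · exact Set.empty_disjoint _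
  rw [configurations_eq hσ]
  refine ⟨hnil.union hcolumns, ?_⟩
  rw [finsum_mem_union hdisj hnil hcolumns, ← Finset.set_biUnion_coe,
    finsum_mem_biUnion (pairwiseDisjoint_image_consColumn _ _) (columns σ π).finite_toSet fun x hx => (ih x hx).1.image _,
    finsum_mem_coe_finset, ← ite_add_sum_columns_eq_prod_signedCountPerms hσ hπ]
  congr 1
  · split_ifs with h <;> simp [h]
  · refine sum_congr rfl fun x hx => ?_
    rw [finsum_mem_image fun p _ q _ h => (consColumn_inj.1 h).2,
      finsum_mem_congr rfl fun q hq =>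
        neg_one_pow_length_consColumn hx (length_le_of_mem_configurations hq),
      ← mul_finsum_mem' _ _ (ih x hx).1, (ih x hx).2]
termination_by ∑ i, Multiset.card (σ i) + π.length
decreasing_by exact card_add_length_lt_of_mem_columns hx

end Configurations

theorem stmt1_general (ℓ : ℕ) (σ : Fin ℓ → Multiset ℕ)
    (hσ : ∀ i, ∀ x ∈ σ i, 0 < x) (π : List ℕ) (hπ : ∀ x ∈ π, 0 < x) :
    (∑ᶠ p ∈ {p : List ℕ × (Fin ℓ → List ℕ) |
        (∀ x ∈ p.1, 0 < x) ∧
        (∀ i, (p.2 i).length = p.1.length) ∧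
        (∀ j : Fin p.1.length, ∑ i, (p.2 i).getD j.1 0 ≤ p.1.get j) ∧
        (∀ i, ((p.2 i : Multiset ℕ).filter (· ≠ 0)) = σ i) ∧
        ((List.ofFn fun j : Fin p.1.length =>
            p.1.get j - ∑ i, (p.2 i).getD j.1 0).filter (fun x => x ≠ 0) = π)},
      ((-1 : ℤ) ^ (p.1.length - π.length)))
    = ∏ i, ((-1 : ℤ) ^ (Multiset.card (σ i)) *
        (Nat.multinomial (σ i).toFinset ((σ i).count) : ℤ)) := by
  have h := (finite_and_finsum_configurations (σ := σ) (π := π)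
    (fun i h => lt_irrefl 0 (hσ i 0 h)) (fun h => lt_irrefl 0 (hπ 0 h))).2
  simp only [Multiset.signedCountPerms, ← Multiset.multinomial_toFinset_count] at h
  exact h

/-- Lemma 3.7 of the paper.  The element `μ ∈ 𝒬` with exactly `m` distinct parts is
encoded by the sequence `c = (c₁, …, c_m)` of its part-multiplicities, the distinguished
sub-multisets `μ(i)` by sequences `d(i)` of nonnegative integers, and the complement
`μ ∖ ∪ μ(i)` by the sequence `π`.  Then
`∑ (−1)^{m−h} = ∏ᵢ (−1)^{|σ(i)|} |σ(i)|! / ∏ⱼ a(i)ⱼ!`. -/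
theorem stmt1 (ℓ : ℕ) (hl : 1 ≤ ℓ) (σ : Fin ℓ → Multiset ℕ)
    (hσ : ∀ i, ∀ x ∈ σ i, 0 < x) (π : List ℕ) (hπ : ∀ x ∈ π, 0 < x) :
    (∑ᶠ p ∈ {p : List ℕ × (Fin ℓ → List ℕ) |
        (∀ x ∈ p.1, 0 < x) ∧
        (∀ i, (p.2 i).length = p.1.length) ∧
        (∀ j : Fin p.1.length, ∑ i, (p.2 i).getD j.1 0 ≤ p.1.get j) ∧
        (∀ i, ((p.2 i : Multiset ℕ).filter (· ≠ 0)) = σ i) ∧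
        ((List.ofFn fun j : Fin p.1.length =>
            p.1.get j - ∑ i, (p.2 i).getD j.1 0).filter (fun x => x ≠ 0) = π)},
      ((-1 : ℤ) ^ (p.1.length - π.length)))
    = ∏ i, ((-1 : ℤ) ^ (Multiset.card (σ i)) *
        (Nat.multinomial (σ i).toFinset ((σ i).count) : ℤ)) :=
  stmt1_general ℓ σ hσ π hπ
end

section
/- Let a ≥ 2 be an integer and let μ be a partition all of whose elements are at least a. Let λ and λ′ be partitions with Σλ ≥ Σμ and Σλ′ ≥ Σμ, and suppose that the sub-multiset of elements of λ that are ≥ a coincides with the sub-multiset of elements of λ′ that are ≥ a. Then 1^{Σλ−Σμ}·μ ≤ λ in the refinement order if and only if 1^{Σλ′−Σμ}·μ ≤ λ′ in the refinement order. (This is the key claim in the proof of Proposition 5.13 of the paper: when all elements of μ are at least a, whether 1^{j}μ ≤ λ depends only on the 'big part' b(λ) of λ.) -/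
/-- An elementary merge replaces two elements `x`, `y` of a multiset by the single
element `x + y`. -/
def ElemMerge {M : Type*} [AddCommMonoid M] (μ ν : Multiset M) : Prop :=
  ∃ (x y : M) (rest : Multiset M), μ = x ::ₘ y ::ₘ rest ∧ ν = (x + y) ::ₘ rest

/-- The refinement order: `Refines μ λ` iff `λ` can be obtained from `μ` by a finite
(possibly empty) sequence of elementary merges. -/
def Refines {M : Type*} [AddCommMonoid M] : Multiset M → Multiset M → Prop :=
  Relation.ReflTransGen ElemMerge

namespace Stmt2Aux

lemma refines_refl {M : Type*} [AddCommMonoid M] (μ : Multiset M) : Refines μ μ :=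
  Relation.ReflTransGen.refl

lemma elemMerge_add_right {M : Type*} [AddCommMonoid M] {μ ν : Multiset M} (c : Multiset M)
    (h : ElemMerge μ ν) : ElemMerge (μ + c) (ν + c) := by
  obtain ⟨x, y, rest, h1, h2⟩ := h
  exact ⟨x, y, rest + c, by simp [h1], by simp [h2]⟩

lemma refines_add_right {M : Type*} [AddCommMonoid M] {μ ν : Multiset M} (c : Multiset M)
    (h : Refines μ ν) : Refines (μ + c) (ν + c) := by
  induction h with
  | refl => exact Relation.ReflTransGen.refl
  | tail _ hstep ih => exact ih.tail (elemMerge_add_right c hstep)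

lemma refines_add {M : Type*} [AddCommMonoid M] {s t u v : Multiset M}
    (h1 : Refines s t) (h2 : Refines u v) : Refines (s + u) (t + v) := by
  have a1 : Refines (s + u) (t + u) := refines_add_right u h1
  have a2 : Refines (u + t) (v + t) := refines_add_right t h2
  rw [add_comm u t, add_comm v t] at a2
  exact a1.trans a2

lemma refines_sum_eq {M : Type*} [AddCommMonoid M] {μ ν : Multiset M}
    (h : Refines μ ν) : μ.sum = ν.sum := by
  induction h with
  | refl => rfl
  | tail _ hstep ih =>
    obtain ⟨x, y, rest, h1, h2⟩ := hstep
    subst h1; subst h2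
    simp only [Multiset.sum_cons] at *
    rw [ih, add_assoc]

lemma refines_pos {μ ν : Multiset ℕ} (h : Refines μ ν) (hμ : ∀ x ∈ μ, 0 < x) :
    ∀ x ∈ ν, 0 < x := by
  induction h with
  | refl => exact hμ
  | tail _ hstep ih =>
    obtain ⟨x, y, rest, h1, h2⟩ := hstep
    subst h1; subst h2
    intro z hz
    rcases Multiset.mem_cons.mp hz with rfl | hz
    · have := ih x (by simp)
      omega
    · exact ih z (by simp [hz])

lemma refines_ones_add_singleton (m x : ℕ) :
    Refines (Multiset.replicate m 1 + {x}) {x + m} := by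
  induction m generalizing x with
  | zero =>
    simp only [Multiset.replicate_zero, zero_add, add_zero]
    exact refines_refl _
  | succ n ih =>
    have hstep : ElemMerge (Multiset.replicate (n + 1) 1 + {x})
        (Multiset.replicate n 1 + {1 + x}) := by
      refine ⟨1, x, Multiset.replicate n 1, ?_, ?_⟩
      · rw [Multiset.replicate_succ, Multiset.cons_add]
        congr 1
        rw [add_comm, Multiset.singleton_add]
      · rw [add_comm (Multiset.replicate n 1) _, Multiset.singleton_add]
    have h2 := ih (1 + x)
    have heq : (1 + x) + n = x + (n + 1) := by omega
    rw [heq] at h2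
    exact Relation.ReflTransGen.head hstep h2

lemma refines_ones_singleton {m : ℕ} (hm : 0 < m) :
    Refines (Multiset.replicate m 1) ({m} : Multiset ℕ) := by
  obtain ⟨n, rfl⟩ : ∃ n, m = n + 1 := ⟨m - 1, by omega⟩
  have h := refines_ones_add_singleton n 1
  rw [show (1 : ℕ) + n = n + 1 by omega] at h
  have heq : Multiset.replicate (n + 1) 1 = Multiset.replicate n 1 + {1} := by
    rw [Multiset.replicate_succ, ← Multiset.singleton_add, add_comm]
  rw [heq]
  exact h

lemma refines_ones (s : Multiset ℕ) (hs : ∀ x ∈ s, 0 < x) :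
    Refines (Multiset.replicate s.sum 1) s := by
  induction s using Multiset.induction with
  | empty =>
    simp only [Multiset.sum_zero, Multiset.replicate_zero]
    exact refines_refl _
  | cons x s ih =>
    rw [Multiset.sum_cons, Multiset.replicate_add]
    have h1 : Refines (Multiset.replicate x 1) {x} :=
      refines_ones_singleton (hs x (by simp))
    have h2 := ih (fun y hy => hs y (by simp [hy]))
    have h3 := refines_add h1 h2
    rwa [Multiset.singleton_add] at h3

/-- Hard direction: a refinement of `1^j · μ` induces one on the big parts. -/
lemma keyA (a : ℕ) (ha : 2 ≤ a) (μ : Multiset ℕ) (hμ : ∀ x ∈ μ, a ≤ x)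
    (j : ℕ) (ν : Multiset ℕ) (h : Refines (Multiset.replicate j 1 + μ) ν) :
    Refines (Multiset.replicate ((ν.filter (a ≤ ·)).sum - μ.sum) 1 + μ)
      (ν.filter (a ≤ ·)) := by
  have hstart : ∀ x ∈ Multiset.replicate j 1 + μ, 0 < x := by
    intro x hx
    rcases Multiset.mem_add.mp hx with hx | hx
    · rw [Multiset.eq_of_mem_replicate hx]; omega
    · have := hμ x hx; omega
  induction h with
  | refl =>
    have hf1 : (Multiset.replicate j 1).filter (a ≤ ·) = 0 := by
      rw [Multiset.filter_eq_nil]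
      intro x hx
      rw [Multiset.eq_of_mem_replicate hx]; omega
    have hf2 : μ.filter (a ≤ ·) = μ := Multiset.filter_eq_self.mpr hμ
    rw [Multiset.filter_add, hf1, hf2, zero_add, Nat.sub_self]
    simp only [Multiset.replicate_zero, zero_add]
    exact refines_refl _
  | tail hchain hstep ih =>
    rename_i ν ν'
    have hpos : ∀ x ∈ ν, 0 < x := refines_pos hchain hstart
    obtain ⟨x, y, rest, h1, h2⟩ := hstep
    subst h1; subst h2
    have hx : 0 < x := hpos x (by simp)
    have hy : 0 < y := hpos y (by simp)
    by_cases hax : a ≤ x <;> by_cases hay : a ≤ y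
    · -- both big
      have hxy : a ≤ x + y := by omega
      rw [Multiset.filter_cons_of_pos _ hax, Multiset.filter_cons_of_pos _ hay] at ih
      rw [Multiset.filter_cons_of_pos _ hxy]
      have hsum := refines_sum_eq ih
      simp only [Multiset.sum_add, Multiset.sum_replicate, smul_eq_mul, mul_one,
        Multiset.sum_cons] at hsum ih ⊢
      have hre : Multiset.filter (LE.le a) rest = Multiset.filter (fun x => a ≤ x) rest := rfl
      rw [hre] at hsum ih
      have hcnt : x + y + (Multiset.filter (fun x => a ≤ x) rest).sum - μ.sum
          = x + (y + (Multiset.filter (fun x => a ≤ x) rest).sum) - μ.sum := by omega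
      rw [hcnt]
      exact ih.tail ⟨x, y, Multiset.filter (fun x => a ≤ x) rest, rfl, rfl⟩
    · -- x big, y small
      have hxy : a ≤ x + y := by omega
      rw [Multiset.filter_cons_of_pos _ hax, Multiset.filter_cons_of_neg _ hay] at ih
      rw [Multiset.filter_cons_of_pos _ hxy]
      have hsum := refines_sum_eq ih
      simp only [Multiset.sum_add, Multiset.sum_replicate, smul_eq_mul, mul_one,
        Multiset.sum_cons] at hsum ih ⊢
      have hre : Multiset.filter (LE.le a) rest = Multiset.filter (fun x => a ≤ x) rest := rfl
      rw [hre] at hsum ih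
      have hcnt : x + y + (Multiset.filter (fun x => a ≤ x) rest).sum - μ.sum
          = y + (x + (Multiset.filter (fun x => a ≤ x) rest).sum - μ.sum) := by omega
      rw [hcnt, Multiset.replicate_add, add_assoc]
      have step1 := refines_add (refines_refl (Multiset.replicate y 1)) ih
      have step2 := refines_add (refines_ones_add_singleton y x)
        (refines_refl (Multiset.filter (fun x => a ≤ x) rest))
      rw [add_assoc, Multiset.singleton_add, Multiset.singleton_add] at step2
      exact step1.trans step2
    · -- y big, x small
      have hxy : a ≤ x + y := by omega
      rw [Multiset.filter_cons_of_neg _ hax, Multiset.filter_cons_of_pos _ hay] at ih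
      rw [Multiset.filter_cons_of_pos _ hxy]
      have hsum := refines_sum_eq ih
      simp only [Multiset.sum_add, Multiset.sum_replicate, smul_eq_mul, mul_one,
        Multiset.sum_cons] at hsum ih ⊢
      have hre : Multiset.filter (LE.le a) rest = Multiset.filter (fun x => a ≤ x) rest := rfl
      rw [hre] at hsum ih
      have hcnt : x + y + (Multiset.filter (fun x => a ≤ x) rest).sum - μ.sum
          = x + (y + (Multiset.filter (fun x => a ≤ x) rest).sum - μ.sum) := by omega
      rw [hcnt, Multiset.replicate_add, add_assoc]
      have step1 := refines_add (refines_refl (Multiset.replicate x 1)) ih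
      have step2 := refines_add (refines_ones_add_singleton x y)
        (refines_refl (Multiset.filter (fun x => a ≤ x) rest))
      rw [add_assoc, Multiset.singleton_add, Multiset.singleton_add,
        show y + x = x + y by omega] at step2
      exact step1.trans step2
    · -- both small
      rw [Multiset.filter_cons_of_neg _ hax, Multiset.filter_cons_of_neg _ hay] at ih
      have hsum := refines_sum_eq ih
      simp only [Multiset.sum_add, Multiset.sum_replicate, smul_eq_mul, mul_one] at hsum ih
      have hre : Multiset.filter (LE.le a) rest = Multiset.filter (fun x => a ≤ x) rest := rfl
      rw [hre] at hsum ih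
      by_cases hxy : a ≤ x + y
      · rw [Multiset.filter_cons_of_pos _ hxy]
        simp only [Multiset.sum_cons]
        have hcnt : x + y + (Multiset.filter (fun x => a ≤ x) rest).sum - μ.sum
            = (x + y) + ((Multiset.filter (fun x => a ≤ x) rest).sum - μ.sum) := by omega
        rw [hcnt, Multiset.replicate_add, add_assoc]
        have step1 := refines_add (refines_ones_singleton (show 0 < x + y by omega)) ih
        rwa [Multiset.singleton_add] at step1
      · rw [Multiset.filter_cons_of_neg _ hxy]
        exact ih

lemma main (a : ℕ) (ha : 2 ≤ a) (μ lam : Multiset ℕ)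
    (hμ : ∀ x ∈ μ, a ≤ x) (hlam : ∀ x ∈ lam, 0 < x) (h1 : μ.sum ≤ lam.sum) :
    Refines (Multiset.replicate (lam.sum - μ.sum) 1 + μ) lam ↔
      Refines (Multiset.replicate ((lam.filter (a ≤ ·)).sum - μ.sum) 1 + μ)
        (lam.filter (a ≤ ·)) := by
  constructor
  · intro h
    exact keyA a ha μ hμ _ lam h
  · intro h
    have hbs : lam.filter (a ≤ ·) + lam.filter (fun x => ¬ a ≤ x) = lam :=
      Multiset.filter_add_not _ _
    have hsum := refines_sum_eq h
    simp only [Multiset.sum_add, Multiset.sum_replicate, smul_eq_mul, mul_one] at hsum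
    have hbsum : μ.sum ≤ (lam.filter (a ≤ ·)).sum := by omega
    have hlamsum : lam.sum = (lam.filter (a ≤ ·)).sum + (lam.filter (fun x => ¬ a ≤ x)).sum := by
      conv_lhs => rw [← hbs]
      rw [Multiset.sum_add]
    have hspos : ∀ x ∈ lam.filter (fun x => ¬ a ≤ x), 0 < x := by
      intro x hx
      exact hlam x (Multiset.mem_of_mem_filter hx)
    have hones := refines_ones _ hspos
    have hcnt : lam.sum - μ.sum = (lam.filter (fun x => ¬ a ≤ x)).sum
        + ((lam.filter (a ≤ ·)).sum - μ.sum) := by omega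
    rw [hcnt, Multiset.replicate_add, add_assoc]
    have hfin := refines_add hones h
    rwa [add_comm (lam.filter (fun x => ¬ a ≤ x)) _, hbs] at hfin

end Stmt2Aux

/-- Key claim in the proof of Proposition 5.13: for `μ` with all parts `≥ a`, whether
`1^{Σλ−Σμ}·μ ≤ λ` in the refinement order depends only on the sub-multiset of elements
of `λ` that are `≥ a`. -/
theorem stmt2 (a : ℕ) (ha : 2 ≤ a) (μ lam lam' : Multiset ℕ)
    (hμ : ∀ x ∈ μ, a ≤ x)
    (hlam : ∀ x ∈ lam, 0 < x) (hlam' : ∀ x ∈ lam', 0 < x)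
    (h1 : μ.sum ≤ lam.sum) (h2 : μ.sum ≤ lam'.sum)
    (hbig : lam.filter (a ≤ ·) = lam'.filter (a ≤ ·)) :
    Refines (Multiset.replicate (lam.sum - μ.sum) 1 + μ) lam ↔
      Refines (Multiset.replicate (lam'.sum - μ.sum) 1 + μ) lam' := by
  rw [Stmt2Aux.main a ha μ lam hμ hlam h1, Stmt2Aux.main a ha μ lam' hμ hlam' h2, hbig]
end

section
/- Let a ≥ 2 be an integer and let ν be a partition all of whose elements are at least a. Define S(ν,a) to be the set of partitions μ with all elements ≥ a for which there exist an integer j′ ≥ a and a partition π with all elements < a such that Σπ + Σμ = j′ + Σν, 1^{j′}·ν ≤ π·μ in the refinement order, and 1^{j′−a}·a·ν ≤ π·μ fails. Then: (i) S(ν,a) is a finite set; and (ii) for every integer j ≥ a, every abelian group A, and every function W from partitions to A, ∑_{λ : 1^{j−a}·a·ν ≤ λ} W(λ) = ∑_{λ : 1^{j}·ν ≤ λ} W(λ) − ∑_{μ ∈ S(ν,a)} ∑_{π} W(π·μ), where the inner sum runs over all partitions π with all elements < a and Σπ = j − Σμ + Σν (an empty sum if this quantity is negative), and each outer sum over λ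 runs over the finitely many partitions above the indicated partition in the refinement order. (This is Proposition 5.13(a) of the paper, with w_λ replaced by an arbitrary function W, which is legitimate since the proof establishes the underlying decomposition of sets of partitions.) -/
/-- The set `S(ν,a)` of the paper: partitions `μ` with all elements `≥ a` such that
for some `j′ ≥ a` and some partition `π` with all elements `< a` satisfying
`Σπ + Σμ = j′ + Σν`, one has `1^{j′}·ν ≤ π·μ` but not `1^{j′−a}·a·ν ≤ π·μ`. -/
def Spart (a : ℕ) (ν : Multiset ℕ) : Set (Multiset ℕ) :=
  {μ | (∀ x ∈ μ, a ≤ x) ∧ ∃ j' : ℕ, a ≤ j' ∧ ∃ π : Multiset ℕ,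
      (∀ x ∈ π, 0 < x ∧ x < a) ∧ π.sum + μ.sum = j' + ν.sum ∧
      Refines (Multiset.replicate j' 1 + ν) (π + μ) ∧
      ¬ Refines (Multiset.replicate (j' - a) 1 + (a ::ₘ ν)) (π + μ)}

/-!
Write `PacksInto ν μ` when the parts of `ν` can be distributed into bins of sizes given by the
parts of `μ` (bins may stay empty). Grouping the parts of a refinement into blocks shows that,
when `π` has parts `< a` and `μ`, `ν` have parts `≥ a`, the refinement `1^j·ν ≤ π·μ` holds
exactly when `PacksInto ν μ` (and the sums match): the parts of `ν` are too large to land in a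
part of `π`, and the `1`s fill up every bin. Hence `S(ν,a)` consists of the `μ` into which `ν`
packs but `a·ν` does not; in such a packing every bin `c` holds a nonempty block of sum
`> c - a`, which bounds `μ` and makes `S(ν,a)` finite. Splitting every `λ ≥ 1^j·ν` into its
parts `< a` and `≥ a` then identifies `{λ ≥ 1^j·ν} \ {λ ≥ 1^{j-a}·a·ν}` with the disjoint union
of the sets `π·μ`, `μ ∈ S(ν,a)`.
-/

open Multiset

section Refines

variable {M : Type*} [AddCommMonoid M] {s t u v : Multiset M}

theorem Refines.refl (s : Multiset M) : Refines s s := Relation.ReflTransGen.refl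

theorem Refines.trans (h₁ : Refines s t) (h₂ : Refines t u) : Refines s u :=
  Relation.ReflTransGen.trans h₁ h₂

theorem Refines.add_right (h : Refines s t) (u : Multiset M) : Refines (s + u) (t + u) :=
  Relation.ReflTransGen.lift (· + u)
    (fun _ _ ⟨x, y, r, hs, ht⟩ => ⟨x, y, r + u, by simp [hs], by simp [ht]⟩) _ _ h

theorem Refines.add (h₁ : Refines s t) (h₂ : Refines u v) : Refines (s + u) (t + v) :=
  (h₁.add_right u).trans (by simpa only [add_comm _ t] using h₂.add_right t)

theorem Refines.sum_eq (h : Refines s t) : s.sum = t.sum := by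
  induction h with
  | refl => rfl
  | tail _ hm ih =>
    obtain ⟨x, y, r, rfl, rfl⟩ := hm
    simpa [add_assoc] using ih

theorem Refines.card_le (h : Refines s t) : card t ≤ card s := by
  induction h with
  | refl => exact le_rfl
  | tail _ hm ih =>
    obtain ⟨x, y, r, rfl, rfl⟩ := hm
    simp only [card_cons] at ih ⊢
    omega

theorem Refines.forall_mem {p : M → Prop} (hp : ∀ x y, p x → p y → p (x + y))
    (h : Refines s t) (hs : ∀ x ∈ s, p x) : ∀ x ∈ t, p x := by
  induction h with
  | refl => exact hs
  | tail _ hm ih =>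
    obtain ⟨x, y, r, rfl, rfl⟩ := hm
    simp only [mem_cons, forall_eq_or_imp] at ih ⊢
    exact ⟨hp x y ih.1 ih.2.1, ih.2.2⟩

theorem refines_singleton_sum (hs : s ≠ 0) : Refines s {s.sum} := by
  induction s using Multiset.induction_on with
  | empty => exact absurd rfl hs
  | cons x t ih =>
    rcases eq_or_ne t 0 with rfl | ht
    · simpa using Refines.refl {x}
    · have h : Refines (x ::ₘ t) {x, t.sum} := by
        simpa [singleton_add] using (Refines.refl {x}).add (ih ht)
      exact Relation.ReflTransGen.tail h ⟨x, t.sum, 0, rfl, by simp⟩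

theorem refines_iff_exists_blocks :
    Refines s t ↔ ∃ P : Multiset (Multiset M), P.join = s ∧
      P.Rel (fun B c => B ≠ 0 ∧ B.sum = c) t := by
  constructor
  · intro h
    induction h with
    | refl =>
      refine ⟨s.map ({·}), sum_map_singleton s, rel_map_left.2 (rel_refl_of_refl_on ?_)⟩
      simp
    | tail _ hm ih =>
      obtain ⟨P, hjoin, hrel⟩ := ih
      obtain ⟨x, y, r, rfl, rfl⟩ := hm
      obtain ⟨Bx, P', ⟨hBx, rfl⟩, hrel', rfl⟩ := rel_cons_right.1 hrel
      obtain ⟨By, P'', ⟨-, rfl⟩, hrel'', rfl⟩ := rel_cons_right.1 hrel'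
      refine ⟨(Bx + By) ::ₘ P'', by simpa [add_assoc] using hjoin, hrel''.cons ⟨?_, sum_add _ _⟩⟩
      simpa using fun h _ => hBx h
  · rintro ⟨P, rfl, hrel⟩
    induction hrel with
    | zero => exact Refines.refl 0
    | cons hBc _ ih =>
      rw [join_cons, ← singleton_add]
      exact (hBc.2 ▸ refines_singleton_sum hBc.1).add ih

end Refines

theorem refines_replicate_add_cons {a j : ℕ} (ha : 0 < a) (hj : a ≤ j) (ν : Multiset ℕ) :
    Refines (replicate j 1 + ν) (replicate (j - a) 1 + (a ::ₘ ν)) := by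
  have hne : replicate a 1 ≠ 0 := card_pos.1 (by simpa using ha)
  have h : Refines (replicate a 1) {a} := by simpa using refines_singleton_sum hne
  have hj' : replicate j 1 = replicate (j - a) 1 + replicate a 1 := by
    rw [← replicate_add, Nat.sub_add_cancel hj]
  rw [hj', add_assoc, ← singleton_add]
  exact (Refines.refl _).add (h.add (Refines.refl ν))

theorem finite_setOf_card_le_forall_le (n b : ℕ) :
    {m : Multiset ℕ | card m ≤ n ∧ ∀ x ∈ m, x ≤ b}.Finite := by
  refine (n • range (b + 1)).powerset.toFinset.finite_toSet.subset fun m ⟨hn, hb⟩ => ?_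
  simp only [Finset.mem_coe, mem_toFinset, mem_powerset, le_iff_count, count_nsmul]
  intro x
  by_cases hx : x ∈ m
  · rw [count_eq_one_of_mem (nodup_range _) (mem_range.2 (Nat.lt_succ_of_le (hb x hx))), mul_one]
    exact (count_le_card x m).trans hn
  · simp [count_eq_zero.2 hx]

theorem finite_setOf_refines (s : Multiset ℕ) : {t | Refines s t}.Finite :=
  (finite_setOf_card_le_forall_le (card s) s.sum).subset fun _ ht =>
    ⟨ht.card_le, fun _ hx => ht.sum_eq ▸ le_sum_of_mem hx⟩

theorem filter_le_add_eq_right {a : ℕ} {s t : Multiset ℕ} (hs : ∀ x ∈ s, x < a)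
    (ht : ∀ x ∈ t, a ≤ x) : (s + t).filter (a ≤ ·) = t := by
  rw [filter_add, filter_eq_self.2 ht, filter_eq_nil.2 fun x hx => (hs x hx).not_ge, zero_add]

def PacksInto (ν μ : Multiset ℕ) : Prop :=
  ∃ P : Multiset (Multiset ℕ), P.join = ν ∧ P.Rel (fun B c => B.sum ≤ c) μ

section PacksInto

variable {ν μ π : Multiset ℕ}

theorem packsInto_zero (μ : Multiset ℕ) : PacksInto 0 μ :=
  ⟨μ.map fun _ => 0, by simp [join], rel_map_left.2 (rel_refl_of_refl_on (by simp))⟩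

theorem PacksInto.add {ν' μ' : Multiset ℕ} (h : PacksInto ν μ) (h' : PacksInto ν' μ') :
    PacksInto (ν + ν') (μ + μ') := by
  obtain ⟨P, rfl, hP⟩ := h
  obtain ⟨P', rfl, hP'⟩ := h'
  exact ⟨P + P', join_add P P', hP.add hP'⟩

theorem PacksInto.sum_le (h : PacksInto ν μ) : ν.sum ≤ μ.sum := by
  obtain ⟨P, rfl, hP⟩ := h
  rw [sum_join]
  exact sum_le_sum_of_rel_le (rel_map_left.2 hP)

theorem Refines.packsInto_filter {s t : Multiset ℕ} (h : Refines s t) (p : ℕ → Prop)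
    [DecidablePred p] : PacksInto (s.filter p) t := by
  obtain ⟨P, rfl, hP⟩ := refines_iff_exists_blocks.1 h
  refine ⟨P.map (filter p), (filter_join P p).symm, rel_map_left.2 (hP.mono ?_)⟩
  rintro B - c - ⟨-, rfl⟩
  calc (B.filter p).sum ≤ (B.filter p).sum + (B.filter (¬ p ·)).sum := Nat.le_add_right _ _
    _ = B.sum := by rw [← sum_add, filter_add_not]

theorem PacksInto.of_add_left {a : ℕ} (h : PacksInto ν (π + μ)) (hν : ∀ x ∈ ν, a ≤ x)
    (hπ : ∀ x ∈ π, x < a) : PacksInto ν μ := by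
  obtain ⟨P, rfl, hP⟩ := h
  obtain ⟨P₁, P₂, hP₁, hP₂, rfl⟩ := rel_add_right.1 hP
  -- a block placed into a part of `π` has sum `< a`, so it contains no element of `ν`
  have hempty : P₁.join = 0 := by
    refine sum_eq_zero fun B hB => eq_zero_of_forall_notMem fun x hx => ?_
    obtain ⟨c, hc, hBc⟩ := exists_mem_of_rel_of_mem hP₁ hB
    have hxa := hν x (by simp only [join_add, mem_add, mem_join]; exact .inl ⟨B, hB, hx⟩)
    have := le_sum_of_mem hx
    have := hπ c hc
    omega
  exact ⟨P₂, by rw [join_add, hempty, zero_add], hP₂⟩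

theorem PacksInto.refines (h : PacksInto ν μ) (hμ : ∀ c ∈ μ, 0 < c) :
    Refines (replicate (μ.sum - ν.sum) 1 + ν) μ := by
  obtain ⟨P, rfl, hP⟩ := h
  induction hP with
  | zero => exact Refines.refl 0
  | @cons B c P μ hBc hP ih =>
    have hle := PacksInto.sum_le ⟨P, rfl, hP⟩
    have hc := hμ c (mem_cons_self c μ)
    have hblock : Refines (replicate (c - B.sum) 1 + B) {c} := by
      have hsum : (replicate (c - B.sum) 1 + B).sum = c := by
        simp only [sum_add, sum_replicate, smul_eq_mul, mul_one]
        omega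
      have hne : replicate (c - B.sum) 1 + B ≠ 0 := fun h0 => by
        simp only [h0, sum_zero] at hsum
        omega
      simpa only [hsum] using refines_singleton_sum hne
    have hsplit : replicate ((c ::ₘ μ).sum - (B ::ₘ P).join.sum) 1 + (B ::ₘ P).join =
        (replicate (c - B.sum) 1 + B) + (replicate (μ.sum - P.join.sum) 1 + P.join) := by
      rw [join_cons, sum_add, sum_cons, add_add_add_comm, ← replicate_add]
      congr 2
      omega
    rw [hsplit, ← singleton_add]
    exact hblock.add (ih fun d hd => hμ d (mem_cons_of_mem hd))

theorem rel_lt_sum_add_of_not_packsInto_cons {x : ℕ} {P : Multiset (Multiset ℕ)}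
    (hP : P.Rel (fun B c => B.sum ≤ c) μ) (hx : ¬PacksInto (x ::ₘ P.join) μ) :
    P.Rel (fun B c => c < B.sum + x) μ := by
  induction hP with
  | zero => exact .zero
  | @cons B c P μ hBc hP ih =>
    refine .cons ?_ (ih fun ⟨Q, hQ, hQμ⟩ => hx ⟨B ::ₘ Q, ?_, hQμ.cons hBc⟩)
    · by_contra! hle
      refine hx ⟨(x ::ₘ B) ::ₘ P, by simp, hP.cons ?_⟩
      simpa [add_comm x] using hle
    · rw [join_cons, hQ, join_cons, add_cons]

end PacksInto

section Spart

variable {a j : ℕ} {ν μ π : Multiset ℕ}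

theorem refines_replicate_add_iff_packsInto (ha : 2 ≤ a) (hν : ∀ x ∈ ν, a ≤ x)
    (hπ : ∀ x ∈ π, 0 < x ∧ x < a) (hμ : ∀ x ∈ μ, 0 < x) (hsum : π.sum + μ.sum = j + ν.sum) :
    Refines (replicate j 1 + ν) (π + μ) ↔ PacksInto ν μ := by
  constructor
  · intro h
    have hfilter : (replicate j 1 + ν).filter (a ≤ ·) = ν :=
      filter_le_add_eq_right (fun x hx => by rw [eq_of_mem_replicate hx]; omega) hν
    exact (hfilter ▸ h.packsInto_filter (a ≤ ·)).of_add_left hν fun x hx => (hπ x hx).2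
  · intro h
    have hπμ : ∀ x ∈ π + μ, 0 < x := by
      simp only [mem_add]
      rintro x (hx | hx)
      exacts [(hπ x hx).1, hμ x hx]
    have hj : (π + μ).sum - ν.sum = j := by rw [sum_add]; omega
    simpa only [zero_add, hj] using ((packsInto_zero π).add h).refines hπμ

theorem refines_and_not_refines_iff (ha : 2 ≤ a) (hν : ∀ x ∈ ν, a ≤ x)
    (hπ : ∀ x ∈ π, 0 < x ∧ x < a) (hμ : ∀ x ∈ μ, a ≤ x) (hj : a ≤ j)
    (hsum : π.sum + μ.sum = j + ν.sum) :
    (Refines (replicate j 1 + ν) (π + μ) ∧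
        ¬Refines (replicate (j - a) 1 + (a ::ₘ ν)) (π + μ)) ↔
      PacksInto ν μ ∧ ¬PacksInto (a ::ₘ ν) μ := by
  have hμ' : ∀ x ∈ μ, 0 < x := fun x hx => by have := hμ x hx; omega
  have haν : ∀ x ∈ a ::ₘ ν, a ≤ x := by simpa using hν
  have hsum' : π.sum + μ.sum = (j - a) + (a ::ₘ ν).sum := by rw [sum_cons]; omega
  rw [refines_replicate_add_iff_packsInto ha hν hπ hμ' hsum,
    refines_replicate_add_iff_packsInto ha haν hπ hμ' hsum']

theorem mem_spart_iff (ha : 2 ≤ a) (hν : ∀ x ∈ ν, a ≤ x) :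
    μ ∈ Spart a ν ↔ (∀ x ∈ μ, a ≤ x) ∧ PacksInto ν μ ∧ ¬PacksInto (a ::ₘ ν) μ := by
  constructor
  · rintro ⟨hμ, j, hj, π, hπ, hsum, h⟩
    exact ⟨hμ, (refines_and_not_refines_iff ha hν hπ hμ hj hsum).1 h⟩
  · rintro ⟨hμ, h⟩
    -- any `π` works as a witness; take `π = 1^a`
    have hπ : ∀ x ∈ replicate a 1, 0 < x ∧ x < a := fun x hx => by
      rw [eq_of_mem_replicate hx]
      omega
    have hsum : (replicate a 1).sum + μ.sum = a + (μ.sum - ν.sum) + ν.sum := by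
      have := h.1.sum_le
      simp only [sum_replicate, smul_eq_mul, mul_one]
      omega
    exact ⟨hμ, _, Nat.le_add_right _ _, _, hπ, hsum,
      (refines_and_not_refines_iff ha hν hπ hμ (Nat.le_add_right _ _) hsum).2 h⟩

theorem spart_subset (ha : 2 ≤ a) (hν : ∀ x ∈ ν, a ≤ x) :
    Spart a ν ⊆ {μ | card μ ≤ card ν ∧ ∀ c ∈ μ, c ≤ ν.sum + a} := by
  intro μ hμ
  obtain ⟨hμa, ⟨P, rfl, hP⟩, hnot⟩ := (mem_spart_iff ha hν).1 hμ
  have hlt := rel_lt_sum_add_of_not_packsInto_cons hP hnot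
  -- `a ≤ c < B.sum + a`, so no block is empty
  have hne : ∀ B ∈ P, 1 ≤ card B := fun B hB => by
    obtain ⟨c, hc, hBc⟩ := exists_mem_of_rel_of_mem hlt hB
    have := hμa c hc
    refine Nat.one_le_iff_ne_zero.2 fun h0 => ?_
    simp only [card_eq_zero.1 h0, sum_zero, zero_add] at hBc
    omega
  refine ⟨?_, fun c hc => ?_⟩
  · calc card μ = card P := (card_eq_card_of_rel hP).symm
      _ ≤ card P.join := by
        simpa using card_nsmul_le_sum (s := P.map card) (a := 1) (by simpa using hne)
  · obtain ⟨B, hB, hBc⟩ := exists_mem_of_rel_of_mem (rel_flip.2 hlt) hc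
    have : B.sum ≤ P.join.sum := by
      rw [sum_join]
      exact le_sum_of_mem (mem_map_of_mem _ hB)
    exact (le_of_lt hBc).trans (by omega)

theorem spart_finite (ha : 2 ≤ a) (hν : ∀ x ∈ ν, a ≤ x) : (Spart a ν).Finite :=
  (finite_setOf_card_le_forall_le (card ν) (ν.sum + a)).subset (spart_subset ha hν)

end Spart

def smallComplements (a n : ℕ) (μ : Multiset ℕ) : Set (Multiset ℕ) :=
  {π | (∀ x ∈ π, 0 < x ∧ x < a) ∧ π.sum + μ.sum = n}

theorem smallComplements_finite (a n : ℕ) (μ : Multiset ℕ) :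
    (smallComplements a n μ).Finite := by
  refine (finite_setOf_card_le_forall_le n n).subset fun π ⟨hπ, hsum⟩ => ⟨?_, fun x hx => ?_⟩
  · have := card_nsmul_le_sum (a := 1) fun x hx => (hπ x hx).1
    rw [smul_eq_mul, mul_one] at this
    omega
  · have := le_sum_of_mem hx
    omega

theorem pairwiseDisjoint_image_add_smallComplements (a n : ℕ) :
    {μ : Multiset ℕ | ∀ x ∈ μ, a ≤ x}.PairwiseDisjoint
      fun μ => (· + μ) '' smallComplements a n μ := by
  rintro μ₁ h₁ μ₂ h₂ hne
  refine Set.disjoint_left.2 ?_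
  rintro _ ⟨π₁, hπ₁, rfl⟩ ⟨π₂, hπ₂, heq⟩
  simp only at heq
  apply hne
  rw [← filter_le_add_eq_right (fun x hx => (hπ₁.1 x hx).2) h₁, ← heq,
    filter_le_add_eq_right (fun x hx => (hπ₂.1 x hx).2) h₂]

theorem setOf_refines_sdiff {a j : ℕ} {ν : Multiset ℕ} (ha : 2 ≤ a) (hν : ∀ x ∈ ν, a ≤ x)
    (hj : a ≤ j) :
    {l | Refines (replicate j 1 + ν) l} \ {l | Refines (replicate (j - a) 1 + (a ::ₘ ν)) l} =
      ⋃ μ ∈ Spart a ν, (· + μ) '' smallComplements a (j + ν.sum) μ := by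
  ext l
  simp only [Set.mem_sdiff, Set.mem_ofPred_eq, Set.mem_iUnion, Set.mem_image, exists_prop]
  constructor
  · rintro ⟨hC, hB⟩
    have hpos : ∀ x ∈ l, 0 < x := hC.forall_mem (fun _ _ hx _ => Nat.add_pos_left hx _) (by
      simp only [mem_add]
      rintro x (hx | hx)
      · rw [eq_of_mem_replicate hx]; exact one_pos
      · have := hν x hx; omega)
    set π := l.filter (· < a)
    set μ := l.filter (¬ · < a)
    have hsplit : π + μ = l := filter_add_not _ l
    have hπ : ∀ x ∈ π, 0 < x ∧ x < a := fun x hx => by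
      rw [mem_filter] at hx
      exact ⟨hpos x hx.1, hx.2⟩
    have hμ : ∀ x ∈ μ, a ≤ x := fun x hx => by
      rw [mem_filter] at hx
      omega
    have hsum : π.sum + μ.sum = j + ν.sum := by
      rw [← sum_add, hsplit, ← hC.sum_eq]
      simp
    rw [← hsplit] at hC hB
    exact ⟨μ, ⟨hμ, j, hj, π, hπ, hsum, hC, hB⟩, π, ⟨hπ, hsum⟩, hsplit⟩
  · rintro ⟨μ, hμ, π, ⟨hπ, hsum⟩, rfl⟩
    obtain ⟨hμa, h⟩ := (mem_spart_iff ha hν).1 hμ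
    exact (refines_and_not_refines_iff ha hν hπ hμa hj hsum).2 h

/-- Proposition 5.13(a) of the paper, for an arbitrary function `W` from partitions to an
abelian group: `S(ν,a)` is finite, and for `j ≥ a`,
`∑_{λ ≥ 1^{j−a}·a·ν} W(λ) = ∑_{λ ≥ 1^{j}·ν} W(λ) − ∑_{μ ∈ S(ν,a)} ∑_π W(π·μ)`,
where `π` runs over partitions with all elements `< a` and `Σπ = j − Σμ + Σν`. -/
theorem stmt3 {A : Type*} [AddCommGroup A] (W : Multiset ℕ → A)
    (a : ℕ) (ha : 2 ≤ a) (ν : Multiset ℕ) (hν : ∀ x ∈ ν, a ≤ x) :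
    (Spart a ν).Finite ∧
    ∀ j : ℕ, a ≤ j →
      (∑ᶠ lam ∈ {lam : Multiset ℕ |
          Refines (Multiset.replicate (j - a) 1 + (a ::ₘ ν)) lam}, W lam)
      = (∑ᶠ lam ∈ {lam : Multiset ℕ | Refines (Multiset.replicate j 1 + ν) lam}, W lam)
        - ∑ᶠ μ ∈ Spart a ν,
            ∑ᶠ π ∈ {π : Multiset ℕ | (∀ x ∈ π, 0 < x ∧ x < a) ∧
                π.sum + μ.sum = j + ν.sum}, W (π + μ) := by
  refine ⟨spart_finite ha hν, fun j hj => eq_sub_of_add_eq ?_⟩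
  have hsub : {l | Refines (replicate (j - a) 1 + (a ::ₘ ν)) l} ⊆
      {l | Refines (replicate j 1 + ν) l} :=
    fun l hl => (refines_replicate_add_cons (by omega) hj ν).trans hl
  have hdisj := (pairwiseDisjoint_image_add_smallComplements a (j + ν.sum)).subset
    fun μ (hμ : μ ∈ Spart a ν) => hμ.1
  rw [← finsum_mem_add_sdiff hsub (finite_setOf_refines _), setOf_refines_sdiff ha hν hj,
    finsum_mem_biUnion hdisj (spart_finite ha hν) fun μ _ => (smallComplements_finite ..).image _]
  congr 1
  exact finsum_mem_congr rfl fun μ _ => (finsum_mem_image fun _ _ _ _ => add_right_cancel).symm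
end

section
/- Let r > 1 and c > 0 be real numbers. Let (s_n)_{n≥0} be a sequence of positive real numbers such that s_n / r^n converges to c as n → ∞, and let (e_n)_{n≥0} be a sequence of real numbers such that the series ∑_{n≥0} |e_n| r^{−n} converges. Define y_n = ∑_{i=0}^{n} e_i s_{n−i}. Then y_n / s_n converges to ∑_{i=0}^{∞} e_i r^{−i} as n → ∞. (This is the analytic content of Lemma 5.2(b) of the paper: if Y(t) = E(t)·Z_X(t) over a finite field and E(1/q^d) converges, then lim #Y_j/#Sym^j X = #E(1/q^d), where s_n plays the role of #Sym^n X and r the role of q^d.) -/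
/-!
Writing `a n = s n / r ^ n` and `w i = e i / r ^ i`, the quotient `y n / s n` becomes
`∑_{i ≤ n} w i * (a (n - i) / a n)`. Since `a n → c ≠ 0`, each ratio `a (n - i) / a n` tends to `1`
and all of them are bounded by `sup ‖a‖ * sup ‖a⁻¹‖`, so Tannery's theorem (dominated convergence
for series), with a constant multiple of `‖w i‖` as majorant, gives the limit `∑' i, w i`.
-/

open Filter Finset Topology

section Convolution

variable {𝕜 : Type*} [NormedField 𝕜] {a : ℕ → 𝕜} {c : 𝕜}

lemma tendsto_comp_sub_div_self (ha : Tendsto a atTop (𝓝 c)) (hc : c ≠ 0) (i : ℕ) :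
    Tendsto (fun n => a (n - i) / a n) atTop (𝓝 1) := by
  rw [← div_self hc]
  exact (ha.comp (tendsto_sub_atTop_nat i)).div ha hc

lemma exists_norm_comp_sub_div_le (ha : Tendsto a atTop (𝓝 c)) (hc : c ≠ 0) :
    ∃ C, ∀ n i, ‖a (n - i) / a n‖ ≤ C := by
  obtain ⟨M, hM⟩ := ha.norm.bddAbove_range
  obtain ⟨K, hK⟩ := (ha.inv₀ hc).norm.bddAbove_range
  refine ⟨M * K, fun n i => ?_⟩
  rw [div_eq_mul_inv, norm_mul]
  exact mul_le_mul (hM ⟨_, rfl⟩) (hK ⟨_, rfl⟩) (norm_nonneg _) ((norm_nonneg _).trans (hM ⟨0, rfl⟩))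

theorem tendsto_sum_range_mul_comp_sub_div [CompleteSpace 𝕜] {w : ℕ → 𝕜}
    (ha : Tendsto a atTop (𝓝 c)) (hc : c ≠ 0) (hw : Summable (‖w ·‖)) :
    Tendsto (fun n => (∑ i ∈ range (n + 1), w i * a (n - i)) / a n) atTop (𝓝 (∑' i, w i)) := by
  obtain ⟨C, hC⟩ := exists_norm_comp_sub_div_le ha hc
  have h_tsum : ∀ n, (∑ i ∈ range (n + 1), w i * a (n - i)) / a n =
      ∑' i, (range (n + 1) : Set ℕ).indicator (fun i => w i * (a (n - i) / a n)) i := by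
    intro n
    rw [← sum_eq_tsum_indicator, sum_div]
    simp only [mul_div_assoc]
  simp only [h_tsum]
  refine tendsto_tsum_of_dominated_convergence (bound := fun i => ‖w i‖ * C) (hw.mul_right C)
    (fun i => ?_) (Eventually.of_forall fun n i => ?_)
  · have h_lim := (tendsto_comp_sub_div_self ha hc i).const_mul (w i)
    rw [mul_one] at h_lim
    refine h_lim.congr' ?_
    filter_upwards [eventually_ge_atTop i] with n hn
    rw [Set.indicator_of_mem (mem_coe.mpr (mem_range.mpr (by omega)))]
  · refine (norm_indicator_le_norm_self _ _).trans ?_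
    rw [norm_mul]
    gcongr
    exact hC n i

end Convolution

lemma sum_range_mul_comp_sub_div_pow {K : Type*} [Field K] {r : K} (hr : r ≠ 0) (e s : ℕ → K)
    (n : ℕ) : (∑ i ∈ range (n + 1), e i * s (n - i)) / r ^ n =
      ∑ i ∈ range (n + 1), e i / r ^ i * (s (n - i) / r ^ (n - i)) := by
  rw [sum_div]
  refine sum_congr rfl fun i hi => ?_
  rw [← pow_sub_mul_pow r (Nat.le_of_lt_succ (mem_range.mp hi))]
  field_simp

theorem stmt6_general (r c : ℝ) (hr : 1 < r) (hc : 0 < c) (s e : ℕ → ℝ)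
    (hslim : Filter.Tendsto (fun n => s n / r ^ n) Filter.atTop (nhds c))
    (he : Summable fun n => |e n| / r ^ n) :
    Filter.Tendsto (fun n => (∑ i ∈ Finset.range (n + 1), e i * s (n - i)) / s n)
      Filter.atTop (nhds (∑' i : ℕ, e i / r ^ i)) := by
  have hr0 : 0 < r := zero_lt_one.trans hr
  have h_rescale : ∀ n, (∑ i ∈ range (n + 1), e i * s (n - i)) / s n =
      (∑ i ∈ range (n + 1), e i / r ^ i * (s (n - i) / r ^ (n - i))) / (s n / r ^ n) := by
    intro n
    rw [← sum_range_mul_comp_sub_div_pow hr0.ne', div_div_div_cancel_right₀ (pow_ne_zero n hr0.ne')]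
  have hw : Summable fun i => ‖e i / r ^ i‖ := by
    simpa [abs_div, abs_of_pos hr0] using he
  simpa only [h_rescale] using tendsto_sum_range_mul_comp_sub_div hslim hc.ne' hw

/-- The analytic content of Lemma 5.2(b) of the paper: if `s_n / r^n → c > 0`,
`∑ |e_n| / r^n < ∞`, and `y_n = ∑_{i=0}^{n} e_i s_{n−i}`, then
`y_n / s_n → ∑_{i=0}^{∞} e_i / r^i`. -/
theorem stmt6 (r c : ℝ) (hr : 1 < r) (hc : 0 < c) (s e : ℕ → ℝ)
    (hs : ∀ n, 0 < s n)
    (hslim : Filter.Tendsto (fun n => s n / r ^ n) Filter.atTop (nhds c))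
    (he : Summable fun n => |e n| / r ^ n) :
    Filter.Tendsto (fun n => (∑ i ∈ Finset.range (n + 1), e i * s (n - i)) / s n)
      Filter.atTop (nhds (∑' i : ℕ, e i / r ^ i)) :=
  stmt6_general r c hr hc s e hslim he
end

section
/- Let F be a finite field with q elements, let K be an algebraic closure of F, and let n ≥ 4 be an integer. Then the number of monic polynomials P ∈ F[X] of degree n such that either P has two distinct roots in K each of multiplicity at least 2, or P has a root in K of multiplicity at least 4, equals q^{n−2}. (This is the paper's explicit claim in §1.29: 'the probability that a polynomial of degree at least 4 over 𝔽_q has two double roots or worse — a quadruple root; a triple root is not enough — is q^{−2}', an instance of Example 5.27 of the paper.) -/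
/-!
Every monic `P` factors uniquely as `P = S * T ^ 2` with `S`, `T` monic and `S` squarefree.
Over a perfect field `S` has only simple roots in `K`, so a root `x` of `P` has multiplicity
`mult_S x + 2 * mult_T x` with `mult_S x ≤ 1`; hence `P` has two double roots or a quadruple root
exactly when `T` has at least two roots counted with multiplicity, i.e. `2 ≤ deg T`. Dividing such
a `T` by `X ^ 2` as `T = X ^ 2 * U + V` with `deg V < 2`, the pairs `(S, U)` are again the
factorizations of the monic polynomials `S * U ^ 2` of degree `n - 4`, so the count is
`q ^ (n - 4) * q ^ 2`.
-/

open Polynomial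

namespace UniqueFactorizationMonoid

variable {R : Type*} [CommMonoidWithZero R]

theorem exists_squarefree_mul_sq [IsCancelMulZero R] [WfDvdMonoid R] [DecompositionMonoid R]
    {x : R} (hx : x ≠ 0) : ∃ a b : R, Squarefree a ∧ a * b ^ 2 = x := by
  induction x using WfDvdMonoid.induction_on_irreducible with
  | zero => contradiction
  | unit u hu => exact ⟨u, 1, hu.squarefree, by rw [one_pow, mul_one]⟩
  | mul z p hz hp ih =>
    obtain ⟨a, b, ha, rfl⟩ := ih hz
    by_cases hpa : p ∣ a
    · obtain ⟨c, rfl⟩ := hpa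
      exact ⟨c, p * b, ha.of_mul_right, by rw [mul_pow, sq p]; ac_rfl⟩
    · refine ⟨p * a, b, ?_, mul_assoc p a _⟩
      exact squarefree_mul_iff.mpr ⟨hp.isRelPrime_iff_not_dvd.mpr hpa, hp.squarefree, ha⟩

theorem associated_of_squarefree_mul_sq_eq [NormalizationMonoid R] [UniqueFactorizationMonoid R]
    {a b c d : R} (ha : Squarefree a) (hc : Squarefree c) (hb : b ≠ 0) (hd : d ≠ 0)
    (h : a * b ^ 2 = c * d ^ 2) : Associated a c ∧ Associated b d := by
  classical
  have : Nontrivial R := nontrivial_of_ne b 0 hb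
  have hcount : ∀ p, (normalizedFactors a).count p = (normalizedFactors c).count p ∧
      (normalizedFactors b).count p = (normalizedFactors d).count p := by
    intro p
    have hp := congrArg (fun x => (normalizedFactors x).count p) h
    simp only [normalizedFactors_mul ha.ne_zero (pow_ne_zero 2 hb),
      normalizedFactors_mul hc.ne_zero (pow_ne_zero 2 hd), normalizedFactors_pow,
      Multiset.count_add, Multiset.count_nsmul] at hp
    have ha1 := Multiset.nodup_iff_count_le_one.mp
      ((squarefree_iff_nodup_normalizedFactors ha.ne_zero).mp ha) p
    have hc1 := Multiset.nodup_iff_count_le_one.mp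
      ((squarefree_iff_nodup_normalizedFactors hc.ne_zero).mp hc) p
    omega
  rw [associated_iff_normalizedFactors_eq_normalizedFactors ha.ne_zero hc.ne_zero,
    associated_iff_normalizedFactors_eq_normalizedFactors hb hd]
  exact ⟨Multiset.ext.mpr fun p => (hcount p).1, Multiset.ext.mpr fun p => (hcount p).2⟩

end UniqueFactorizationMonoid

theorem Multiset.two_le_card_iff {α : Type*} [DecidableEq α] {s : Multiset α} :
    2 ≤ card s ↔ (∃ x y, x ≠ y ∧ x ∈ s ∧ y ∈ s) ∨ ∃ x, 2 ≤ count x s := by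
  constructor
  · intro hs
    obtain ⟨x, hx⟩ := card_pos_iff_exists_mem.mp (by omega : 0 < card s)
    by_cases hy : ∃ y ∈ s, y ≠ x
    · obtain ⟨y, hy, hyx⟩ := hy
      exact .inl ⟨x, y, hyx.symm, hx, hy⟩
    · push Not at hy
      exact .inr ⟨x, (count_eq_card.mpr fun y hy' => (hy y hy').symm) ▸ hs⟩
  · rintro (⟨x, y, hxy, hx, hy⟩ | ⟨x, hx⟩)
    · calc 2 ≤ s.toFinset.card :=
            Finset.one_lt_card.mpr ⟨x, mem_toFinset.mpr hx, y, mem_toFinset.mpr hy, hxy⟩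
        _ ≤ card s := toFinset_card_le s
    · exact hx.trans (count_le_card x s)

namespace Polynomial

section Card

variable {R : Type*} [Semiring R]

theorem card_degreeLT (k : ℕ) : Nat.card (degreeLT R k) = Nat.card R ^ k := by
  rw [Nat.card_congr (degreeLTEquiv R k).toEquiv, Nat.card_fun, Nat.card_fin]

theorem card_monic_natDegree_eq [Nontrivial R] (m : ℕ) :
    Nat.card {P : R[X] // P.Monic ∧ P.natDegree = m} = Nat.card R ^ m := by
  rw [Nat.card_congr (monicEquivDegreeLT m), card_degreeLT]

end Card

section SquarefreeMulSq

variable {F : Type*} [Field F]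

theorem Monic.exists_squarefree_mul_sq {P : F[X]} (hP : P.Monic) :
    ∃ S T : F[X], Squarefree S ∧ S.Monic ∧ T.Monic ∧ S * T ^ 2 = P := by
  classical
  obtain ⟨S, T, hS, hST⟩ := UniqueFactorizationMonoid.exists_squarefree_mul_sq hP.ne_zero
  have hT : T ≠ 0 := by
    rintro rfl
    exact hP.ne_zero (by rw [← hST, zero_pow two_ne_zero, mul_zero])
  refine ⟨normalize S, normalize T, (normalize_associated S).squarefree_iff.mpr hS,
    monic_normalize hS.ne_zero, monic_normalize hT, ?_⟩
  rw [← hP.normalize_eq_self, ← hST, sq, sq, normalize_mul, normalize_mul]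

theorem eq_and_eq_of_squarefree_mul_sq_eq {S₁ T₁ S₂ T₂ : F[X]} (hS₁ : Squarefree S₁)
    (hS₁m : S₁.Monic) (hT₁ : T₁.Monic) (hS₂ : Squarefree S₂) (hS₂m : S₂.Monic) (hT₂ : T₂.Monic)
    (h : S₁ * T₁ ^ 2 = S₂ * T₂ ^ 2) : S₁ = S₂ ∧ T₁ = T₂ := by
  classical
  obtain ⟨hS, hT⟩ := UniqueFactorizationMonoid.associated_of_squarefree_mul_sq_eq hS₁ hS₂
    hT₁.ne_zero hT₂.ne_zero h
  exact ⟨eq_of_monic_of_associated hS₁m hS₂m hS, eq_of_monic_of_associated hT₁ hT₂ hT⟩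

theorem card_monic_eq_card_squarefree_mul_sq (p : F[X] → Prop) :
    Nat.card {P : F[X] // P.Monic ∧ p P} = Nat.card {st : F[X] × F[X] //
      (Squarefree st.1 ∧ st.1.Monic ∧ st.2.Monic) ∧ p (st.1 * st.2 ^ 2)} := by
  refine (Nat.card_congr (Equiv.ofBijective
    (fun st => ⟨st.1.1 * st.1.2 ^ 2, st.2.1.2.1.mul (st.2.1.2.2.pow 2), st.2.2⟩) ⟨?_, ?_⟩)).symm
  · rintro ⟨⟨S₁, T₁⟩, ⟨hS₁, hS₁m, hT₁⟩, _⟩ ⟨⟨S₂, T₂⟩, ⟨hS₂, hS₂m, hT₂⟩, _⟩ h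
    obtain ⟨rfl, rfl⟩ :=
      eq_and_eq_of_squarefree_mul_sq_eq hS₁ hS₁m hT₁ hS₂ hS₂m hT₂ (congrArg Subtype.val h)
    rfl
  · rintro ⟨P, hP, hpP⟩
    obtain ⟨S, T, hS, hSm, hT, rfl⟩ := hP.exists_squarefree_mul_sq
    exact ⟨⟨(S, T), ⟨hS, hSm, hT⟩, hpP⟩, rfl⟩

theorem Monic.natDegree_mul_sq {S T : F[X]} (hS : S.Monic) (hT : T.Monic) :
    (S * T ^ 2).natDegree = S.natDegree + 2 * T.natDegree := by
  rw [hS.natDegree_mul (hT.pow 2), hT.natDegree_pow]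

theorem card_squarefree_mul_sq_natDegree_eq (m : ℕ) :
    Nat.card {st : F[X] × F[X] // (Squarefree st.1 ∧ st.1.Monic ∧ st.2.Monic) ∧
      st.1.natDegree + 2 * st.2.natDegree = m} = Nat.card F ^ m := by
  rw [← card_monic_natDegree_eq, card_monic_eq_card_squarefree_mul_sq]
  exact Nat.card_congr <| Equiv.subtypeEquivRight fun st =>
    and_congr_right fun ⟨_, hSm, hT⟩ => by rw [hSm.natDegree_mul_sq hT]

end SquarefreeMulSq

section XPowMulAdd

variable {R : Type*} [CommRing R] [Nontrivial R] {k : ℕ}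

theorem Monic.natDegree_X_pow_mul {U : R[X]} (hU : U.Monic) :
    (X ^ k * U).natDegree = U.natDegree + k := by
  rw [(monic_X_pow k).natDegree_mul hU, natDegree_X_pow, add_comm]

theorem Monic.degree_lt_degree_X_pow_mul {U V : R[X]} (hU : U.Monic) (hV : V.degree < k) :
    V.degree < (X ^ k * U).degree := by
  refine hV.trans_le ?_
  rw [degree_eq_natDegree ((monic_X_pow k).mul hU).ne_zero, hU.natDegree_X_pow_mul]
  exact_mod_cast Nat.le_add_left k _

theorem Monic.X_pow_mul_add {U V : R[X]} (hU : U.Monic) (hV : V.degree < k) :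
    (X ^ k * U + V).Monic :=
  ((monic_X_pow k).mul hU).add_of_left (hU.degree_lt_degree_X_pow_mul hV)

theorem Monic.natDegree_X_pow_mul_add {U V : R[X]} (hU : U.Monic) (hV : V.degree < k) :
    (X ^ k * U + V).natDegree = U.natDegree + k := by
  rw [natDegree_add_eq_left_of_degree_lt (hU.degree_lt_degree_X_pow_mul hV),
    hU.natDegree_X_pow_mul]

theorem Monic.divByMonic_X_pow {T : R[X]} (hT : T.Monic) (hk : k ≤ T.natDegree) :
    (T /ₘ X ^ k).Monic := by
  rw [Monic, leadingCoeff_divByMonic_of_monic (monic_X_pow k), hT.leadingCoeff]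
  rw [degree_X_pow, degree_eq_natDegree hT.ne_zero]
  exact_mod_cast hk

theorem degree_modByMonic_X_pow_lt (T : R[X]) : (T %ₘ X ^ k).degree < k := by
  simpa only [degree_X_pow] using degree_modByMonic_lt T (monic_X_pow (R := R) k)

noncomputable def squarefreeMulSqDivModXPowEquiv (m k : ℕ) :
    {st : R[X] × R[X] // (Squarefree st.1 ∧ st.1.Monic ∧ st.2.Monic) ∧
      st.1.natDegree + 2 * st.2.natDegree = m + 2 * k ∧ k ≤ st.2.natDegree} ≃
    {st : R[X] × R[X] // (Squarefree st.1 ∧ st.1.Monic ∧ st.2.Monic) ∧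
      st.1.natDegree + 2 * st.2.natDegree = m} × degreeLT R k where
  toFun st :=
    (⟨(st.1.1, st.1.2 /ₘ X ^ k), ⟨st.2.1.1, st.2.1.2.1, st.2.1.2.2.divByMonic_X_pow st.2.2.2⟩, by
      have := st.2.2
      dsimp only
      rw [natDegree_divByMonic _ (monic_X_pow k), natDegree_X_pow]
      omega⟩,
     ⟨st.1.2 %ₘ X ^ k, mem_degreeLT.mpr (degree_modByMonic_X_pow_lt _)⟩)
  invFun p :=
    ⟨(p.1.1.1, X ^ k * p.1.1.2 + p.2.1),
      ⟨p.1.2.1.1, p.1.2.1.2.1, p.1.2.1.2.2.X_pow_mul_add (mem_degreeLT.mp p.2.2)⟩, by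
      have := p.1.2.2
      dsimp only
      rw [p.1.2.1.2.2.natDegree_X_pow_mul_add (mem_degreeLT.mp p.2.2)]
      omega⟩
  left_inv st :=
    Subtype.ext <| Prod.ext rfl <| (add_comm _ _).trans (modByMonic_add_div st.1.2 (X ^ k))
  right_inv p := by
    obtain ⟨hdiv, hmod⟩ := div_modByMonic_unique p.1.1.2 p.2.1 (monic_X_pow k)
      ⟨add_comm _ _, by rw [degree_X_pow]; exact mem_degreeLT.mp p.2.2⟩
    exact Prod.ext (Subtype.ext (Prod.ext rfl hdiv)) (Subtype.ext hmod)

end XPowMulAdd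

section Roots

variable {K : Type*} [Field K]

def HasTwoDoubleRootsOrQuadrupleRoot (P : K[X]) : Prop :=
  (∃ x y, x ≠ y ∧ 2 ≤ P.rootMultiplicity x ∧ 2 ≤ P.rootMultiplicity y) ∨
    ∃ x, 4 ≤ P.rootMultiplicity x

theorem hasTwoDoubleRootsOrQuadrupleRoot_mul_sq_iff [IsAlgClosed K] {S Q : K[X]}
    (hS : S.Separable) (hQ : Q ≠ 0) :
    HasTwoDoubleRootsOrQuadrupleRoot (S * Q ^ 2) ↔ 2 ≤ Q.natDegree := by
  classical
  have hmult : ∀ x, (S * Q ^ 2).rootMultiplicity x =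
      S.rootMultiplicity x + 2 * Q.roots.count x := by
    intro x
    rw [sq, rootMultiplicity_mul (mul_ne_zero hS.ne_zero (mul_ne_zero hQ hQ)),
      rootMultiplicity_mul (mul_ne_zero hQ hQ), count_roots]
    ring
  have hS1 := rootMultiplicity_le_one_of_separable hS
  have h2 : ∀ x, 2 ≤ (S * Q ^ 2).rootMultiplicity x ↔ x ∈ Q.roots := by
    intro x
    rw [hmult, ← Multiset.count_pos]
    have := hS1 x
    omega
  have h4 : ∀ x, 4 ≤ (S * Q ^ 2).rootMultiplicity x ↔ 2 ≤ Q.roots.count x := by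
    intro x
    rw [hmult]
    have := hS1 x
    omega
  rw [← IsAlgClosed.card_roots_eq_natDegree, Multiset.two_le_card_iff]
  simp only [HasTwoDoubleRootsOrQuadrupleRoot, h2, h4]

theorem hasTwoDoubleRootsOrQuadrupleRoot_map_mul_sq_iff {F : Type*} [Field F] [PerfectField F]
    [Algebra F K] [IsAlgClosed K] {S T : F[X]} (hS : Squarefree S) (hT : T ≠ 0) :
    HasTwoDoubleRootsOrQuadrupleRoot ((S * T ^ 2).map (algebraMap F K)) ↔ 2 ≤ T.natDegree := by
  rw [Polynomial.map_mul, Polynomial.map_pow,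
    hasTwoDoubleRootsOrQuadrupleRoot_mul_sq_iff (PerfectField.separable_iff_squarefree.mpr hS).map
      (Polynomial.map_ne_zero hT), natDegree_map]

end Roots

end Polynomial

/-- Over a finite field with `q` elements, the number of monic polynomials of degree
`n ≥ 4` having either two distinct roots of multiplicity at least 2 in an algebraic
closure, or a root of multiplicity at least 4, equals `q^{n−2}` (the instance of
Example 5.27 of the paper stated in §1.29: "the probability that a polynomial of degree
at least 4 has two double roots or worse is `q^{−2}`"). -/
theorem stmt8 (F K : Type*) [Field F] [Fintype F] (q : ℕ) (hq : Fintype.card F = q)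
    [Field K] [Algebra F K] [IsAlgClosure F K] (n : ℕ) (hn : 4 ≤ n) :
    Nat.card {P : Polynomial F // P.Monic ∧ P.natDegree = n ∧
        ((∃ x y : K, x ≠ y ∧
            2 ≤ (P.map (algebraMap F K)).rootMultiplicity x ∧
            2 ≤ (P.map (algebraMap F K)).rootMultiplicity y) ∨
          (∃ x : K, 4 ≤ (P.map (algebraMap F K)).rootMultiplicity x))}
      = q ^ (n - 2) := by
  have : IsAlgClosed K := IsAlgClosure.isAlgClosed F
  obtain ⟨m, rfl⟩ : ∃ m, n = m + 2 * 2 := ⟨n - 4, by omega⟩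
  calc _ = Nat.card {st : F[X] × F[X] // (Squarefree st.1 ∧ st.1.Monic ∧ st.2.Monic) ∧
          st.1.natDegree + 2 * st.2.natDegree = m + 2 * 2 ∧ 2 ≤ st.2.natDegree} :=
        (card_monic_eq_card_squarefree_mul_sq fun P => P.natDegree = m + 2 * 2 ∧
          HasTwoDoubleRootsOrQuadrupleRoot (P.map (algebraMap F K))).trans <|
        Nat.card_congr <| Equiv.subtypeEquivRight fun st => and_congr_right fun ⟨hS, hSm, hT⟩ => by
          rw [hSm.natDegree_mul_sq hT,
            hasTwoDoubleRootsOrQuadrupleRoot_map_mul_sq_iff hS hT.ne_zero]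
    _ = Nat.card F ^ m * Nat.card F ^ 2 := by
      rw [Nat.card_congr (squarefreeMulSqDivModXPowEquiv m 2), Nat.card_prod,
        card_squarefree_mul_sq_natDegree_eq, card_degreeLT]
    _ = q ^ (m + 2 * 2 - 2) := by
      rw [Nat.card_eq_fintype_card, hq, ← pow_add]
      rfl
end
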